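/- arXiv:2107.09057 — 3 statements merged into one kernel-verified Lean document; each statement's English description precedes it below -/
import Mathlib

section
/- Quantum Donoho-Stark uncertainty principle, commutative finite-dimensional case: if k > 0 and F is a k-transform, then for every nonzero x : Fin n → ℂ one has S_d(x) * S_τ(F x) ≥ k. -/
open Finset

/-- Weighted `p`-norm on `Fin n → ℂ` with weight `d`. -/
noncomputable def wnorm {n : ℕ} (d : Fin n → ℝ) (p : ℝ) (x : Fin n → ℂ) : ℝ :=
  (∑ i, d i * ‖x i‖ ^ p) ^ (1 / p)

/-- Sup (infinity) norm on `Fin n → ℂ`. -/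
noncomputable def inorm {n : ℕ} (x : Fin n → ℂ) : ℝ :=
  ⨆ i, ‖x i‖

/-- `G` is the adjoint of `F` with respect to the weighted inner products with
weights `d` and `τ`. -/
def IsAdjointPair {n m : ℕ} (d : Fin n → ℝ) (τ : Fin m → ℝ)
    (F : (Fin n → ℂ) →ₗ[ℂ] (Fin m → ℂ)) (G : (Fin m → ℂ) →ₗ[ℂ] (Fin n → ℂ)) : Prop :=
  ∀ (x : Fin n → ℂ) (u : Fin m → ℂ),
    ∑ j, (τ j : ℂ) * (starRingEnd ℂ) (F x j) * u j
      = ∑ i, (d i : ℂ) * (starRingEnd ℂ) (x i) * G u i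

/-- Weighted support of `x`: sum of the weights over the set where `x` is nonzero. -/
noncomputable def wsupp {n : ℕ} (d : Fin n → ℝ) (x : Fin n → ℂ) : ℝ :=
  ∑ i, if x i = 0 then 0 else d i

/-!
Write `‖·‖₁` and `‖·‖∞` for the weighted `1`-norm and the sup norm. Testing the adjoint relation
against the basis vectors `δᵢ` gives `d i * (F* u) i = ⟪F δᵢ, u⟫_τ`, and `|F δᵢ j| ≤ ‖δᵢ‖₁ = d i`,
so the bound `‖F ·‖∞ ≤ ‖·‖₁` dualises to `‖F* u‖∞ ≤ ‖u‖₁`. Since `‖y‖₁ ≤ S(y) ‖y‖∞`,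
for `x ≠ 0`
`k ‖x‖∞ ≤ ‖F* F x‖∞ ≤ ‖F x‖₁ ≤ S_τ(F x) ‖F x‖∞ ≤ S_τ(F x) ‖x‖₁ ≤ S_τ(F x) S_d(x) ‖x‖∞`,
and dividing by `‖x‖∞ > 0` gives the claim.
-/

section Norms

variable {n : ℕ}

lemma wnorm_one_eq_sum (d : Fin n → ℝ) (x : Fin n → ℂ) :
    wnorm d 1 x = ∑ i, d i * ‖x i‖ := by
  simp [wnorm]

lemma wnorm_one_single (d : Fin n → ℝ) (i : Fin n) :
    wnorm d 1 (Pi.single i 1) = d i := by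
  rw [wnorm_one_eq_sum, sum_eq_single i (fun j _ hj => by simp [hj]) (by simp)]
  simp

lemma norm_apply_le_inorm (x : Fin n → ℂ) (i : Fin n) : ‖x i‖ ≤ inorm x :=
  le_ciSup (Set.finite_range fun j => ‖x j‖).bddAbove i

lemma inorm_pos_of_ne_zero {x : Fin n → ℂ} (hx : x ≠ 0) : 0 < inorm x := by
  obtain ⟨i, hi⟩ := Function.ne_iff.mp hx
  exact (norm_pos_iff.mpr hi).trans_le (norm_apply_le_inorm x i)

lemma wsupp_nonneg {d : Fin n → ℝ} (hd : ∀ i, 0 ≤ d i) (x : Fin n → ℂ) : 0 ≤ wsupp d x :=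
  sum_nonneg fun i _ => by split_ifs <;> simp [hd i]

lemma wnorm_one_le_wsupp_mul_inorm {d : Fin n → ℝ} (hd : ∀ i, 0 ≤ d i) (x : Fin n → ℂ) :
    wnorm d 1 x ≤ wsupp d x * inorm x := by
  rw [wnorm_one_eq_sum, wsupp, sum_mul]
  refine sum_le_sum fun i _ => ?_
  split_ifs with h
  · simp [h]
  · exact mul_le_mul_of_nonneg_left (norm_apply_le_inorm x i) (hd i)

end Norms

namespace IsAdjointPair

variable {n m : ℕ} {d : Fin n → ℝ} {τ : Fin m → ℝ}
  {F : (Fin n → ℂ) →ₗ[ℂ] (Fin m → ℂ)} {G : (Fin m → ℂ) →ₗ[ℂ] (Fin n → ℂ)}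

lemma sum_eq_mul_apply (hadj : IsAdjointPair d τ F G) (u : Fin m → ℂ) (i : Fin n) :
    ∑ j, (τ j : ℂ) * (starRingEnd ℂ) (F (Pi.single i 1) j) * u j = d i * G u i := by
  simpa [Pi.single_apply] using hadj (Pi.single i 1) u

lemma norm_apply_le (hadj : IsAdjointPair d τ F G) (hd : ∀ i, 0 ≤ d i) (hτ : ∀ j, 0 ≤ τ j)
    (u : Fin m → ℂ) (i : Fin n) :
    d i * ‖G u i‖ ≤ ∑ j, τ j * (‖F (Pi.single i 1) j‖ * ‖u j‖) := by
  have hnorm : ‖(d i : ℂ) * G u i‖ = d i * ‖G u i‖ := by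
    rw [norm_mul, Complex.norm_real, Real.norm_of_nonneg (hd i)]
  rw [← hnorm, ← hadj.sum_eq_mul_apply]
  refine (norm_sum_le _ _).trans_eq (sum_congr rfl fun j _ => ?_)
  rw [norm_mul, norm_mul, Complex.norm_conj, Complex.norm_real, Real.norm_of_nonneg (hτ j),
    mul_assoc]

lemma inorm_le_wnorm_one (hadj : IsAdjointPair d τ F G) (hd : ∀ i, 0 < d i)
    (hτ : ∀ j, 0 ≤ τ j) (hF1 : ∀ x, inorm (F x) ≤ wnorm d 1 x) (u : Fin m → ℂ) :
    inorm (G u) ≤ wnorm τ 1 u := by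
  rw [wnorm_one_eq_sum]
  refine Real.iSup_le (fun i => ?_) (sum_nonneg fun j _ => mul_nonneg (hτ j) (norm_nonneg _))
  have hFδ : ∀ j, ‖F (Pi.single i 1) j‖ ≤ d i := fun j =>
    (norm_apply_le_inorm _ j).trans ((hF1 _).trans_eq (wnorm_one_single d i))
  refine le_of_mul_le_mul_left ?_ (hd i)
  calc d i * ‖G u i‖ ≤ ∑ j, τ j * (‖F (Pi.single i 1) j‖ * ‖u j‖) :=
        hadj.norm_apply_le (fun i => (hd i).le) hτ u i
    _ ≤ ∑ j, τ j * (d i * ‖u j‖) := by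
        gcongr with j
        · exact hτ j
        · exact hFδ j
    _ = d i * ∑ j, τ j * ‖u j‖ := by
        rw [mul_sum]
        exact sum_congr rfl fun j _ => by ring

end IsAdjointPair

theorem quantum_donoho_stark_general {n m : ℕ}
    (d : Fin n → ℝ) (τ : Fin m → ℝ) (hd : ∀ i, 0 < d i) (hτ : ∀ j, 0 < τ j)
    (k : ℝ)
    (F : (Fin n → ℂ) →ₗ[ℂ] (Fin m → ℂ)) (G : (Fin m → ℂ) →ₗ[ℂ] (Fin n → ℂ))
    (hadj : IsAdjointPair d τ F G)
    (hF1 : ∀ x, inorm (F x) ≤ wnorm d 1 x)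
    (hFk : ∀ x, k * inorm x ≤ inorm (G (F x)))
    (x : Fin n → ℂ) (hx : x ≠ 0) :
    wsupp d x * wsupp τ (F x) ≥ k := by
  have hd' : ∀ i, 0 ≤ d i := fun i => (hd i).le
  have hτ' : ∀ j, 0 ≤ τ j := fun j => (hτ j).le
  have hFx : inorm (F x) ≤ wsupp d x * inorm x :=
    (hF1 x).trans (wnorm_one_le_wsupp_mul_inorm hd' x)
  refine le_of_mul_le_mul_right ?_ (inorm_pos_of_ne_zero hx)
  calc k * inorm x ≤ inorm (G (F x)) := hFk x
    _ ≤ wnorm τ 1 (F x) := hadj.inorm_le_wnorm_one hd hτ' hF1 (F x)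
    _ ≤ wsupp τ (F x) * inorm (F x) := wnorm_one_le_wsupp_mul_inorm hτ' (F x)
    _ ≤ wsupp τ (F x) * (wsupp d x * inorm x) := by
        gcongr
        exact wsupp_nonneg hτ' (F x)
    _ = wsupp d x * wsupp τ (F x) * inorm x := by ring

/-- Quantum Donoho-Stark uncertainty principle, commutative finite-dimensional case. -/
theorem quantum_donoho_stark {n m : ℕ} (hn : 0 < n) (hm : 0 < m)
    (d : Fin n → ℝ) (τ : Fin m → ℝ) (hd : ∀ i, 0 < d i) (hτ : ∀ j, 0 < τ j)
    (k : ℝ) (hk : 0 < k)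
    (F : (Fin n → ℂ) →ₗ[ℂ] (Fin m → ℂ)) (G : (Fin m → ℂ) →ₗ[ℂ] (Fin n → ℂ))
    (hadj : IsAdjointPair d τ F G)
    (hF1 : ∀ x, inorm (F x) ≤ wnorm d 1 x)
    (hFk : ∀ x, k * inorm x ≤ inorm (G (F x)))
    (x : Fin n → ℂ) (hx : x ≠ 0) :
    wsupp d x * wsupp τ (F x) ≥ k :=
  quantum_donoho_stark_general d τ hd hτ k F G hadj hF1 hFk x hx
end

section
/- Comparison of smooth supports, commutative finite-dimensional case: for every nonzero x : Fin n → ℂ, every ε ∈ [0,1] and every real 1 ≤ p < ∞, one has S_ε^{p,d}(x) ≤ f₁(ε,p,x), and f₁(ε,p,x) = f₃(ε,p,x), where f₁(ε,p,x) = inf { S_d(y) : y : Fin n → ℂ, ‖x − y‖_{p,d} ≤ ε * ‖x‖_{p,d} } and f₃(ε,p,x) = inf { ∑ over i ∈ T with x i ≠ 0 of d i : T is a subset of Fin n with ‖(fun i => if i ∈ T then 0 else x i)‖_{p,d} ≤ ε * ‖x‖_{p,d} }. -/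
open Finset

/-- The `(p, ε)` smooth support of `x` with respect to the weight `d`. -/
noncomputable def smoothSupp {n : ℕ} (d : Fin n → ℝ) (p ε : ℝ) (x : Fin n → ℂ) : ℝ :=
  sInf { s : ℝ | ∃ h : Fin n → ℝ, (∀ i, 0 ≤ h i) ∧ (∀ i, h i ≤ 1) ∧
    wnorm d p (fun i => ((1 - h i : ℝ) : ℂ) * x i) ≤ ε * wnorm d p x ∧
    s = ∑ i, if x i = 0 then 0 else d i * h i }

/-- The smooth support variant `f₁`: infimum of supports of `y` approximating `x`. -/
noncomputable def fOne {n : ℕ} (d : Fin n → ℝ) (p ε : ℝ) (x : Fin n → ℂ) : ℝ :=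
  sInf { s : ℝ | ∃ y : Fin n → ℂ, wnorm d p (x - y) ≤ ε * wnorm d p x ∧ s = wsupp d y }

/-- The smooth support variant `f₃`: infimum over (sub)sets `T` (i.e. projections). -/
noncomputable def fThree {n : ℕ} (d : Fin n → ℝ) (p ε : ℝ) (x : Fin n → ℂ) : ℝ :=
  sInf { s : ℝ | ∃ T : Finset (Fin n),
    wnorm d p (fun i => if i ∈ T then 0 else x i) ≤ ε * wnorm d p x ∧
    s = ∑ i ∈ T, if x i = 0 then 0 else d i }

/-!
A set `T` of coordinates is simultaneously an admissible projection for `f₃`, the `0/1` weight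
`h = 1_T` for the smooth support and the truncation `y = 1_T • x` for `f₁`, all three with the same
cost. Conversely an admissible `y` yields `T = supp y`, whose projection error is pointwise at most
`|x - y|` and whose cost is at most `S_d(y)`.
-/

theorem csInf_le_csInf_of_forall_exists_le {α : Type*} [ConditionallyCompleteLattice α]
    {s t : Set α} (hs : BddBelow s) (ht : t.Nonempty) (h : ∀ b ∈ t, ∃ a ∈ s, a ≤ b) :
    sInf s ≤ sInf t :=
  le_csInf ht fun _ hb => let ⟨_, ha, hab⟩ := h _ hb; (csInf_le hs ha).trans hab

section

variable {n : ℕ} {d : Fin n → ℝ} {p ε : ℝ}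

theorem wnorm_nonneg (hd : ∀ i, 0 ≤ d i) (x : Fin n → ℂ) : 0 ≤ wnorm d p x :=
  Real.rpow_nonneg (sum_nonneg fun i _ => mul_nonneg (hd i) (Real.rpow_nonneg (norm_nonneg _) _)) _

theorem wnorm_zero (hp : p ≠ 0) : wnorm d p 0 = 0 := by
  simp [wnorm, Real.zero_rpow hp, hp]

theorem wnorm_le_wnorm (hd : ∀ i, 0 ≤ d i) (hp : 0 ≤ p) {u v : Fin n → ℂ}
    (h : ∀ i, ‖u i‖ ≤ ‖v i‖) : wnorm d p u ≤ wnorm d p v := by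
  unfold wnorm
  gcongr with i
  · exact sum_nonneg fun i _ => mul_nonneg (hd i) (Real.rpow_nonneg (norm_nonneg _) _)
  · exact hd i
  · exact h i

theorem fThree_le_fOne (hd : ∀ i, 0 ≤ d i) (hp : 0 < p) (hε : 0 ≤ ε) (x : Fin n → ℂ) :
    fThree d p ε x ≤ fOne d p ε x := by
  classical
  refine csInf_le_csInf_of_forall_exists_le ⟨0, ?_⟩ ⟨_, x, ?_, rfl⟩ ?_
  · rintro _ ⟨T, -, rfl⟩
    exact sum_nonneg fun i _ => by split_ifs <;> simp [hd i]
  · simpa [wnorm_zero hp.ne'] using mul_nonneg hε (wnorm_nonneg hd x)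
  rintro _ ⟨y, hy, rfl⟩
  refine ⟨_, ⟨univ.filter (y · ≠ 0), (wnorm_le_wnorm hd hp.le fun i => ?_).trans hy, rfl⟩, ?_⟩
  · by_cases hyi : y i = 0 <;> simp [hyi]
  · rw [wsupp, ← sum_ite_mem_eq]
    exact sum_le_sum fun i _ => by split_ifs <;> simp_all

theorem fOne_le_fThree (hd : ∀ i, 0 ≤ d i) (hp : p ≠ 0) (hε : 0 ≤ ε) (x : Fin n → ℂ) :
    fOne d p ε x ≤ fThree d p ε x := by
  refine csInf_le_csInf_of_forall_exists_le ⟨0, ?_⟩ ⟨_, univ, ?_, rfl⟩ ?_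
  · rintro _ ⟨y, -, rfl⟩
    exact sum_nonneg fun i _ => by split_ifs <;> simp [hd i]
  · simpa [← Pi.zero_def, wnorm_zero hp] using mul_nonneg hε (wnorm_nonneg hd x)
  rintro _ ⟨T, hT, rfl⟩
  refine ⟨_, ⟨fun i => if i ∈ T then x i else 0, ?_, rfl⟩, ?_⟩
  · convert hT using 2
    ext i
    by_cases hi : i ∈ T <;> simp [hi]
  · rw [wsupp, ← sum_ite_mem_eq T]
    exact (sum_congr rfl fun i _ => by split_ifs <;> simp_all).le

theorem smoothSupp_le_fThree (hd : ∀ i, 0 ≤ d i) (hp : p ≠ 0) (hε : 0 ≤ ε) (x : Fin n → ℂ) :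
    smoothSupp d p ε x ≤ fThree d p ε x := by
  refine csInf_le_csInf_of_forall_exists_le ⟨0, ?_⟩ ⟨_, univ, ?_, rfl⟩ ?_
  · rintro _ ⟨h, h0, -, -, rfl⟩
    exact sum_nonneg fun i _ => by split_ifs <;> simp [mul_nonneg (hd i) (h0 i)]
  · simpa [← Pi.zero_def, wnorm_zero hp] using mul_nonneg hε (wnorm_nonneg hd x)
  rintro _ ⟨T, hT, rfl⟩
  refine ⟨_, ⟨fun i => if i ∈ T then 1 else 0, fun i => ?_, fun i => ?_, ?_, rfl⟩, ?_⟩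
  · dsimp only; split_ifs <;> norm_num
  · dsimp only; split_ifs <;> norm_num
  · convert hT using 2
    ext i
    by_cases hi : i ∈ T <;> simp [hi]
  · rw [← sum_ite_mem_eq T]
    exact (sum_congr rfl fun i _ => by split_ifs <;> simp_all).le

end

theorem smooth_support_comparison_general {n : ℕ}
    (d : Fin n → ℝ) (hd : ∀ i, 0 < d i)
    (x : Fin n → ℂ) (ε p : ℝ) (hε : ε ∈ Set.Icc (0:ℝ) 1) (hp : 1 ≤ p) :
    smoothSupp d p ε x ≤ fOne d p ε x ∧ fOne d p ε x = fThree d p ε x := by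
  have hd₀ : ∀ i, 0 ≤ d i := fun i => (hd i).le
  have hp₀ : 0 < p := one_pos.trans_le hp
  have h₃₁ := fThree_le_fOne hd₀ hp₀ hε.1 x
  exact ⟨(smoothSupp_le_fThree hd₀ hp₀.ne' hε.1 x).trans h₃₁,
    (fOne_le_fThree hd₀ hp₀.ne' hε.1 x).antisymm h₃₁⟩

/-- Comparison of smooth supports, commutative finite-dimensional case. -/
theorem smooth_support_comparison {n : ℕ} (hn : 0 < n)
    (d : Fin n → ℝ) (hd : ∀ i, 0 < d i)
    (x : Fin n → ℂ) (hx : x ≠ 0) (ε p : ℝ) (hε : ε ∈ Set.Icc (0:ℝ) 1) (hp : 1 ≤ p) :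
    smoothSupp d p ε x ≤ fOne d p ε x ∧ fOne d p ε x = fThree d p ε x :=
  smooth_support_comparison_general d hd x ε p hε hp
end

section
/- Quantum Hausdorff-Young inequality for k-transforms, commutative finite-dimensional case: if k > 0, F is a k-transform, and F* ∘ F = k • id, then for all reals p, q with 2 ≤ p < ∞ and 1/p + 1/q = 1, and any x : Fin n → ℂ, one has ‖F x‖_{p,τ} ≤ k^(1/p) * ‖x‖_{q,d}. -/
/-!
The hypotheses say that `F` is a contraction from `L¹(d)` to `L^∞(τ)` and, through `F* F = k`,
that `k^(-1/2) F` is an isometry from `L²(d)` to `L²(τ)`. As in the Riesz–Thorin theorem,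
interpolate between the two through the Hadamard three-lines theorem, applied to the entire
function `z ↦ ⟨F X_z, U_z⟩_τ` with `X_z = |x|^{e(z)} x`, `U_z = |u|^{e(z)} u`; the two edges of
the strip give the `L¹ → L^∞` and `L² → L²` bounds, so that `|⟨F x, u⟩_τ| ≤ k^(1/p) ‖x‖_q ‖u‖_q`.
Testing against `u = conj (F x) |F x|^(p-2)`, the equality case of Hölder's inequality, gives the
estimate for `‖F x‖_p`.
-/

open Finset

open ComplexConjugate

lemma rpow_le_one_add_rpow {a t T : ℝ} (ha : 0 ≤ a) (ht : 0 ≤ t) (htT : t ≤ T) :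
    a ^ t ≤ (1 + a) ^ T :=
  (Real.rpow_le_rpow ha (by linarith) ht).trans
    (Real.rpow_le_rpow_of_exponent_le (by linarith) htT)

lemma two_sub_two_div_mem_Icc {q : ℝ} (hq1 : 1 ≤ q) (hq2 : q ≤ 2) :
    2 - 2 / q ∈ Set.Icc (0 : ℝ) 1 := by
  have hq : 0 < q := by linarith
  constructor
  · have : 2 / q ≤ 2 := by rw [div_le_iff₀ hq]; linarith
    linarith
  · have : 1 ≤ 2 / q := by rw [le_div_iff₀ hq]; linarith
    linarith

lemma rpow_mul_sqrt_rpow_eq {C k q : ℝ} (hC : 0 ≤ C) (hk : 0 ≤ k) (hq : q ≠ 0) :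
    C ^ (1 - (2 - 2 / q)) * √(k * C) ^ (2 - 2 / q) = k ^ (1 - 1 / q) * C ^ (1 / q) := by
  rw [Real.sqrt_eq_rpow, ← Real.rpow_mul (mul_nonneg hk hC), Real.mul_rpow hk hC,
    mul_left_comm, ← Real.rpow_add' hC (by field_simp; ring_nf; exact inv_ne_zero hq)]
  ring_nf

lemma rpow_one_div_le_of_le_mul_rpow {S A p q : ℝ} (hpq : p.HolderConjugate q) (hS : 0 ≤ S)
    (hA : 0 ≤ A) (h : S ≤ A * S ^ (1 / q)) : S ^ (1 / p) ≤ A := by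
  rcases hS.eq_or_lt with rfl | hS
  · rwa [Real.zero_rpow hpq.one_div_ne_zero]
  · refine le_of_mul_le_mul_right ?_ (Real.rpow_pos_of_pos hS (1 / q))
    rwa [← Real.rpow_add hS, hpq.one_div_add_one_div, div_one, Real.rpow_one]

lemma sum_mul_mul_le_sqrt_mul_sqrt {κ : Type*} (s : Finset κ) {w f g : κ → ℝ}
    (hw : ∀ j, 0 ≤ w j) (hf : ∀ j, 0 ≤ f j) (hg : ∀ j, 0 ≤ g j) :
    ∑ j ∈ s, w j * (f j * g j) ≤ √(∑ j ∈ s, w j * f j ^ 2) * √(∑ j ∈ s, w j * g j ^ 2) := by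
  refine le_of_eq_of_le (Finset.sum_congr rfl fun j _ => ?_)
    (Real.sum_sqrt_mul_sqrt_le s (fun j => mul_nonneg (hw j) (sq_nonneg (f j)))
      (fun j => mul_nonneg (hw j) (sq_nonneg (g j))))
  rw [← Real.sqrt_mul (mul_nonneg (hw j) (sq_nonneg _)),
    show w j * f j ^ 2 * (w j * g j ^ 2) = (w j * (f j * g j)) ^ 2 by ring,
    Real.sqrt_sq (mul_nonneg (hw j) (mul_nonneg (hf j) (hg j)))]

noncomputable def normCpowMul (s v : ℂ) : ℂ := (‖v‖ : ℂ) ^ s * v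

@[simp]
lemma normCpowMul_zero (v : ℂ) : normCpowMul 0 v = v := by simp [normCpowMul]

lemma norm_normCpowMul {s : ℂ} (hs : s.re + 1 ≠ 0) (v : ℂ) :
    ‖normCpowMul s v‖ = ‖v‖ ^ (s.re + 1) := by
  rcases eq_or_ne v 0 with rfl | hv
  · simp [normCpowMul, Real.zero_rpow hs]
  · rw [normCpowMul, norm_mul, Complex.norm_cpow_eq_rpow_re_of_pos (norm_pos_iff.2 hv),
      Real.rpow_add_one (norm_ne_zero_iff.2 hv)]

lemma Differentiable.normCpowMul {e : ℂ → ℂ} (he : Differentiable ℂ e) (v : ℂ) :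
    Differentiable ℂ fun z => normCpowMul (e z) v := by
  rcases eq_or_ne v 0 with rfl | hv
  · simp [_root_.normCpowMul]
  · exact (he.const_cpow (Or.inl (mod_cast norm_ne_zero_iff.2 hv))).mul_const v

/-- Chosen so that `normCpowMul (interpExp q z) v` has modulus `‖v‖ ^ q` on `re z = 0`,
modulus `‖v‖ ^ (q / 2)` on `re z = 1`, and equals `v` at `z = 2 - 2 / q`. -/
noncomputable def interpExp (q : ℝ) (z : ℂ) : ℂ := (q - 1 : ℝ) - (q / 2 : ℝ) * z

lemma interpExp_re_add_one (q : ℝ) (z : ℂ) : (interpExp q z).re + 1 = q * (1 - z.re / 2) := by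
  simp only [interpExp, Complex.sub_re, Complex.ofReal_re, Complex.re_ofReal_mul]
  ring

lemma differentiable_interpExp (q : ℝ) : Differentiable ℂ (interpExp q) :=
  (differentiable_const _).sub ((differentiable_const _).mul differentiable_id)

lemma interpExp_two_sub_two_div {q : ℝ} (hq : q ≠ 0) : interpExp q (2 - 2 / q : ℝ) = 0 := by
  rw [interpExp, ← Complex.ofReal_mul, ← Complex.ofReal_sub, Complex.ofReal_eq_zero]
  field_simp
  ring

lemma norm_normCpowMul_interpExp_of_re_eq_zero {q : ℝ} (hq : q ≠ 0) {z : ℂ} (hz : z.re = 0)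
    (v : ℂ) : ‖normCpowMul (interpExp q z) v‖ = ‖v‖ ^ q := by
  have h := interpExp_re_add_one q z
  rw [hz] at h
  rw [norm_normCpowMul (by simpa [h] using hq), h]
  norm_num

lemma sq_norm_normCpowMul_interpExp_of_re_eq_one {q : ℝ} (hq : q ≠ 0) {z : ℂ} (hz : z.re = 1)
    (v : ℂ) : ‖normCpowMul (interpExp q z) v‖ ^ 2 = ‖v‖ ^ q := by
  have h := interpExp_re_add_one q z
  rw [hz, show q * (1 - 1 / 2) = q / 2 by ring] at h
  rw [norm_normCpowMul (by rw [h]; exact div_ne_zero hq two_ne_zero), h,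
    ← Real.rpow_mul_natCast (norm_nonneg v)]
  norm_num

lemma norm_normCpowMul_interpExp_le {q : ℝ} (hq : 0 < q) {z : ℂ} (hz0 : 0 ≤ z.re)
    (hz1 : z.re ≤ 1) (v : ℂ) : ‖normCpowMul (interpExp q z) v‖ ≤ (1 + ‖v‖) ^ q := by
  have h := interpExp_re_add_one q z
  rw [norm_normCpowMul (by rw [h]; nlinarith), h]
  exact rpow_le_one_add_rpow (norm_nonneg v) (by nlinarith) (by nlinarith)

lemma mul_conj_mul_rpow_norm_sub_two (a : ℂ) {p : ℝ} (hp : p ≠ 0) :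
    a * (conj a * ((‖a‖ ^ (p - 2) : ℝ) : ℂ)) = ((‖a‖ ^ p : ℝ) : ℂ) := by
  have hsplit : ‖a‖ ^ p = ‖a‖ ^ (2 : ℝ) * ‖a‖ ^ (p - 2) := by
    rw [← Real.rpow_add' (norm_nonneg a) (by contrapose! hp; linarith), add_sub_cancel]
  rw [← mul_assoc, Complex.mul_conj', hsplit, Real.rpow_two]
  push_cast
  ring

lemma norm_conj_mul_rpow_norm_sub_two (a : ℂ) {p : ℝ} (hp : p ≠ 1) :
    ‖conj a * ((‖a‖ ^ (p - 2) : ℝ) : ℂ)‖ = ‖a‖ ^ (p - 1) := by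
  rw [norm_mul, Complex.norm_conj, Complex.norm_of_nonneg (by positivity),
    ← Real.rpow_one_add' (norm_nonneg a) (by contrapose! hp; linarith)]
  ring_nf

section Interpolation

variable {ι κ : Type*} [Fintype ι] [Fintype κ] {d : ι → ℝ} {τ : κ → ℝ} {k : ℝ}
  {F : (ι → ℂ) →ₗ[ℂ] (κ → ℂ)}

lemma norm_sum_mul_mul_le (hτ : ∀ j, 0 ≤ τ j) (a b : κ → ℂ) :
    ‖∑ j, (τ j : ℂ) * a j * b j‖ ≤ ∑ j, τ j * (‖a j‖ * ‖b j‖) := by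
  refine (norm_sum_le _ _).trans_eq (Finset.sum_congr rfl fun j _ => ?_)
  rw [norm_mul, norm_mul, Complex.norm_of_nonneg (hτ j), mul_assoc]

lemma norm_pairing_le_of_norm_apply_le (hτ : ∀ j, 0 ≤ τ j)
    (hF : ∀ y j, ‖F y j‖ ≤ ∑ i, d i * ‖y i‖) (y : ι → ℂ) (w : κ → ℂ) :
    ‖∑ j, (τ j : ℂ) * F y j * w j‖ ≤ (∑ i, d i * ‖y i‖) * ∑ j, τ j * ‖w j‖ := by
  refine (norm_sum_mul_mul_le hτ _ _).trans ?_
  rw [Finset.mul_sum]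
  refine Finset.sum_le_sum fun j _ => ?_
  exact (mul_le_mul_of_nonneg_left (mul_le_mul_of_nonneg_right (hF y j) (norm_nonneg (w j)))
    (hτ j)).trans_eq (mul_left_comm _ _ _)

lemma norm_pairing_le_of_plancherel (hτ : ∀ j, 0 ≤ τ j)
    (hF : ∀ y, ∑ j, τ j * ‖F y j‖ ^ 2 = k * ∑ i, d i * ‖y i‖ ^ 2) (y : ι → ℂ) (w : κ → ℂ) :
    ‖∑ j, (τ j : ℂ) * F y j * w j‖ ≤
      √(k * ((∑ i, d i * ‖y i‖ ^ 2) * ∑ j, τ j * ‖w j‖ ^ 2)) := by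
  refine (norm_sum_mul_mul_le hτ _ _).trans ?_
  refine (sum_mul_mul_le_sqrt_mul_sqrt _ hτ (fun _ => norm_nonneg _)
    (fun _ => norm_nonneg _)).trans_eq ?_
  rw [← Real.sqrt_mul (Finset.sum_nonneg fun j _ => by have := hτ j; positivity), hF, mul_assoc]

lemma differentiable_pairing {X : ℂ → ι → ℂ} {U : ℂ → κ → ℂ}
    (hX : ∀ i, Differentiable ℂ fun z => X z i) (hU : ∀ j, Differentiable ℂ fun z => U z j) :
    Differentiable ℂ fun z => ∑ j, (τ j : ℂ) * F (X z) j * U z j := by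
  have hFX : Differentiable ℂ fun z => F (X z) :=
    (LinearMap.toContinuousLinearMap F).differentiable.comp (differentiable_pi.2 hX)
  exact Differentiable.fun_sum fun j _ =>
    ((differentiable_const _).mul (differentiable_pi.1 hFX j)).mul (hU j)

open Complex HadamardThreeLines in
theorem norm_pairing_le_interpolated (hd : ∀ i, 0 ≤ d i) (hτ : ∀ j, 0 ≤ τ j) (hk : 0 ≤ k)
    (hF1 : ∀ y j, ‖F y j‖ ≤ ∑ i, d i * ‖y i‖)
    (hF2 : ∀ y, ∑ j, τ j * ‖F y j‖ ^ 2 = k * ∑ i, d i * ‖y i‖ ^ 2)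
    {q : ℝ} (hq1 : 1 ≤ q) (hq2 : q ≤ 2) (x : ι → ℂ) (u : κ → ℂ) :
    ‖∑ j, (τ j : ℂ) * F x j * u j‖ ≤
      k ^ (1 - 1 / q) * ((∑ i, d i * ‖x i‖ ^ q) * ∑ j, τ j * ‖u j‖ ^ q) ^ (1 / q) := by
  have hq : 0 < q := by linarith
  set X : ℂ → ι → ℂ := fun z i => normCpowMul (interpExp q z) (x i)
  set U : ℂ → κ → ℂ := fun z j => normCpowMul (interpExp q z) (u j)
  set g : ℂ → ℂ := fun z => ∑ j, (τ j : ℂ) * F (X z) j * U z j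
  set C := (∑ i, d i * ‖x i‖ ^ q) * ∑ j, τ j * ‖u j‖ ^ q
  set θ : ℝ := 2 - 2 / q
  have hθ : (θ : ℂ) ∈ verticalClosedStrip 0 1 := by
    simpa only [verticalClosedStrip, Set.mem_preimage, ofReal_re] using
      two_sub_two_div_mem_Icc hq1 hq2
  have hg : Differentiable ℂ g := differentiable_pairing
    (fun i => (differentiable_interpExp q).normCpowMul (x i))
    (fun j => (differentiable_interpExp q).normCpowMul (u j))
  have hbdd : BddAbove ((norm ∘ g) '' verticalClosedStrip 0 1) := by
    refine ⟨(∑ i, d i * (1 + ‖x i‖) ^ q) * ∑ j, τ j * (1 + ‖u j‖) ^ q, ?_⟩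
    rintro _ ⟨z, ⟨hz0, hz1⟩, rfl⟩
    refine (norm_pairing_le_of_norm_apply_le hτ hF1 (X z) (U z)).trans ?_
    have hb := norm_normCpowMul_interpExp_le hq hz0 hz1
    exact mul_le_mul
      (Finset.sum_le_sum fun i _ => mul_le_mul_of_nonneg_left (hb (x i)) (hd i))
      (Finset.sum_le_sum fun j _ => mul_le_mul_of_nonneg_left (hb (u j)) (hτ j))
      (Finset.sum_nonneg fun j _ => mul_nonneg (hτ j) (norm_nonneg _))
      (Finset.sum_nonneg fun i _ => mul_nonneg (hd i) (by positivity))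
  have h0 : ∀ z ∈ re ⁻¹' {0}, ‖g z‖ ≤ C := fun z hz => by
    refine (norm_pairing_le_of_norm_apply_le hτ hF1 (X z) (U z)).trans_eq ?_
    simp only [X, U, norm_normCpowMul_interpExp_of_re_eq_zero hq.ne' hz, C]
  have h1 : ∀ z ∈ re ⁻¹' {1}, ‖g z‖ ≤ √(k * C) := fun z hz => by
    refine (norm_pairing_le_of_plancherel hτ hF2 (X z) (U z)).trans_eq ?_
    simp only [X, U, sq_norm_normCpowMul_interpExp_of_re_eq_one hq.ne' hz, C]
  have hgθ : g θ = ∑ j, (τ j : ℂ) * F x j * u j := by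
    have hθ0 : interpExp q θ = 0 := interpExp_two_sub_two_div hq.ne'
    simp only [g, X, U, hθ0, normCpowMul_zero]
  have hC : 0 ≤ C := mul_nonneg (Finset.sum_nonneg fun i _ => mul_nonneg (hd i) (by positivity))
    (Finset.sum_nonneg fun j _ => mul_nonneg (hτ j) (by positivity))
  calc ‖∑ j, (τ j : ℂ) * F x j * u j‖ = ‖g θ‖ := by rw [hgθ]
    _ ≤ C ^ (1 - θ) * √(k * C) ^ θ := by
      simpa only [ofReal_re] using
        norm_le_interp_of_mem_verticalClosedStrip₀₁' g hθ hg.diffContOnCl hbdd h0 h1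
    _ = k ^ (1 - 1 / q) * C ^ (1 / q) := rpow_mul_sqrt_rpow_eq hC hk hq.ne'

theorem weighted_hausdorff_young (hd : ∀ i, 0 ≤ d i) (hτ : ∀ j, 0 ≤ τ j) (hk : 0 ≤ k)
    (hF1 : ∀ y j, ‖F y j‖ ≤ ∑ i, d i * ‖y i‖)
    (hF2 : ∀ y, ∑ j, τ j * ‖F y j‖ ^ 2 = k * ∑ i, d i * ‖y i‖ ^ 2)
    {p q : ℝ} (hpq : p.HolderConjugate q) (hp : 2 ≤ p) (x : ι → ℂ) :
    (∑ j, τ j * ‖F x j‖ ^ p) ^ (1 / p) ≤ k ^ (1 / p) * (∑ i, d i * ‖x i‖ ^ q) ^ (1 / q) := by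
  have hq2 : q ≤ 2 := by
    rw [hpq.conjugate_eq, div_le_iff₀ hpq.sub_one_pos]
    linarith
  set S := ∑ j, τ j * ‖F x j‖ ^ p
  set u : κ → ℂ := fun j => conj (F x j) * ((‖F x j‖ ^ (p - 2) : ℝ) : ℂ)
  have hpair : ∑ j, (τ j : ℂ) * F x j * u j = S := by
    simp only [u, mul_assoc, mul_conj_mul_rpow_norm_sub_two _ hpq.ne_zero, S]
    push_cast
    rfl
  have hu : ∑ j, τ j * ‖u j‖ ^ q = S := by
    simp only [u, norm_conj_mul_rpow_norm_sub_two _ hpq.lt.ne', ← Real.rpow_mul (norm_nonneg _),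
      hpq.sub_one_mul_conj, S]
  have hS : 0 ≤ S := Finset.sum_nonneg fun j _ => mul_nonneg (hτ j) (by positivity)
  have hX : 0 ≤ ∑ i, d i * ‖x i‖ ^ q :=
    Finset.sum_nonneg fun i _ => mul_nonneg (hd i) (by positivity)
  have key := norm_pairing_le_interpolated hd hτ hk hF1 hF2 hpq.symm.lt.le hq2 x u
  rw [hpair, hu, Complex.norm_of_nonneg hS, Real.mul_rpow hX hS, ← mul_assoc,
    show 1 - 1 / q = 1 / p by simpa [one_div] using hpq.symm.one_sub_inv] at key
  exact rpow_one_div_le_of_le_mul_rpow hpq hS (by positivity) key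

end Interpolation

lemma norm_le_inorm {m : ℕ} (u : Fin m → ℂ) (j : Fin m) : ‖u j‖ ≤ inorm u :=
  le_ciSup (f := fun j => ‖u j‖) (Set.finite_range _).bddAbove j

lemma wnorm_one {n : ℕ} (d : Fin n → ℝ) (x : Fin n → ℂ) : wnorm d 1 x = ∑ i, d i * ‖x i‖ := by
  simp [wnorm]

lemma IsAdjointPair.sum_mul_norm_sq_eq {n m : ℕ} {d : Fin n → ℝ} {τ : Fin m → ℝ} {k : ℝ}
    {F : (Fin n → ℂ) →ₗ[ℂ] (Fin m → ℂ)} {G : (Fin m → ℂ) →ₗ[ℂ] (Fin n → ℂ)}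
    (hadj : IsAdjointPair d τ F G) (hiso : ∀ y, G (F y) = (k : ℂ) • y) (y : Fin n → ℂ) :
    ∑ j, τ j * ‖F y j‖ ^ 2 = k * ∑ i, d i * ‖y i‖ ^ 2 := by
  have h := hadj y (F y)
  simp only [hiso, Pi.smul_apply, smul_eq_mul, mul_assoc, Complex.conj_mul',
    mul_left_comm _ (k : ℂ), ← Finset.mul_sum] at h
  exact_mod_cast h

theorem quantum_hausdorff_young_general {n m : ℕ}
    (d : Fin n → ℝ) (τ : Fin m → ℝ) (hd : ∀ i, 0 < d i) (hτ : ∀ j, 0 < τ j)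
    (k : ℝ) (hk : 0 < k)
    (F : (Fin n → ℂ) →ₗ[ℂ] (Fin m → ℂ)) (G : (Fin m → ℂ) →ₗ[ℂ] (Fin n → ℂ))
    (hadj : IsAdjointPair d τ F G)
    (hF1 : ∀ x, inorm (F x) ≤ wnorm d 1 x)
    (hiso : ∀ y, G (F y) = (k : ℂ) • y)
    (p q : ℝ) (hp : 2 ≤ p) (hpq : 1 / p + 1 / q = 1)
    (x : Fin n → ℂ) :
    wnorm τ p (F x) ≤ k ^ (1 / p) * wnorm d q x := by
  have hpq' : p.HolderConjugate q :=
    Real.holderConjugate_iff.2 ⟨by linarith, by simpa only [one_div] using hpq⟩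
  have hF1' (y : Fin n → ℂ) (j : Fin m) : ‖F y j‖ ≤ ∑ i, d i * ‖y i‖ :=
    (norm_le_inorm (F y) j).trans ((hF1 y).trans_eq (wnorm_one d y))
  exact weighted_hausdorff_young (fun i => (hd i).le) (fun j => (hτ j).le) hk.le hF1'
    (hadj.sum_mul_norm_sq_eq hiso) hpq' hp x

/-- Quantum Hausdorff-Young inequality for k-transforms,
commutative finite-dimensional case. -/
theorem quantum_hausdorff_young {n m : ℕ} (hn : 0 < n) (hm : 0 < m)
    (d : Fin n → ℝ) (τ : Fin m → ℝ) (hd : ∀ i, 0 < d i) (hτ : ∀ j, 0 < τ j)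
    (k : ℝ) (hk : 0 < k)
    (F : (Fin n → ℂ) →ₗ[ℂ] (Fin m → ℂ)) (G : (Fin m → ℂ) →ₗ[ℂ] (Fin n → ℂ))
    (hadj : IsAdjointPair d τ F G)
    (hF1 : ∀ x, inorm (F x) ≤ wnorm d 1 x)
    (hFk : ∀ x, k * inorm x ≤ inorm (G (F x)))
    (hiso : ∀ y, G (F y) = (k : ℂ) • y)
    (p q : ℝ) (hp : 2 ≤ p) (hpq : 1 / p + 1 / q = 1)
    (x : Fin n → ℂ) :
    wnorm τ p (F x) ≤ k ^ (1 / p) * wnorm d q x :=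
  quantum_hausdorff_young_general d τ hd hτ k hk F G hadj hF1 hiso p q hp hpq x
end
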